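/- arXiv:1901.05420 — 9 statements merged into one kernel-verified Lean document; each statement's English description precedes it below -/
import Mathlib

section
/- Under the closed-loop equations of the two-way-coded system under injection attacks, the plant output satisfies Ȳ = (K*P/(1 + K*P))*R + (a⁻¹*(1 + c*K)*P/(1 + K*P))*W + (a⁻¹*(b − (a*d − b*c)*K)*P/(1 + K*P))*Z. -/
/-- Embedding of real scalars into the field of real rational functions. -/
noncomputable def co : ℝ → RatFunc ℝ := algebraMap ℝ (RatFunc ℝ)

/-- Closed-loop expression for the plant output `Ȳ` of the two-way-coded system under injection attacks `W, Z` and reference `R`. -/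
theorem twoWayCoding_closedLoop_stmt1
    (a b c d : ℝ) (had : a * d ≠ 0) (hdet : a * d - b * c ≠ 0)
    (P K R W Z Y Ybar U Ubar Q Qbar V Vbar : RatFunc ℝ)
    (hYbar : Ybar = P * Ubar)
    (hUbar : Ubar = co (d / (a * d - b * c)) * Qbar + co (-b / (a * d - b * c)) * Ybar)
    (hVbar : Vbar = co (-c / (a * d - b * c)) * Qbar + co (a / (a * d - b * c)) * Ybar)
    (hU : U = K * (R - Y))
    (hY : Y = co c * U + co d * V)
    (hQ : Q = co a * U + co b * V)
    (hQbar : Qbar = Q + W)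
    (hV : V = Vbar + Z)
    (hwp1 : 1 + K * P ≠ 0)
    (hwp2 : 1 + co c * K ≠ 0)
    (hwp3 : co (a * d - b * c) + co b * P ≠ 0) :
    Ybar = (K * P / (1 + K * P)) * R
      + ((co a)⁻¹ * (1 + co c * K) * P / (1 + K * P)) * W
      + ((co a)⁻¹ * (co b - co (a * d - b * c) * K) * P / (1 + K * P)) * Z := by
  have ha : a ≠ 0 := left_ne_zero_of_mul had
  have hA : co a ≠ 0 := (map_ne_zero (algebraMap ℝ (RatFunc ℝ))).mpr ha
  have hE : co (a * d - b * c) ≠ 0 := (map_ne_zero (algebraMap ℝ (RatFunc ℝ))).mpr hdet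
  simp only [co, map_div₀, map_neg, map_sub, map_mul] at *
  set A := algebraMap ℝ (RatFunc ℝ) a with hAdef
  set B := algebraMap ℝ (RatFunc ℝ) b with hBdef
  set C := algebraMap ℝ (RatFunc ℝ) c with hCdef
  set D := algebraMap ℝ (RatFunc ℝ) d with hDdef
  have e1 : (A*D - B*C) * Ubar = D * Qbar - B * Ybar := by
    rw [hUbar]; field_simp; ring
  have e2 : (A*D - B*C) * Vbar = -(C * Qbar) + A * Ybar := by
    rw [hVbar]; field_simp
  have f1 : A * Ubar = A * U + B * Z + W := by
    apply mul_left_cancel₀ hE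
    linear_combination A*e1 + (A*D-B*C)*hQbar + (A*D-B*C)*hQ + (A*D-B*C)*B*hV + B*e2
  have f2 : A * Y = A * Ybar + (A*D-B*C) * Z - C * W := by
    apply mul_left_cancel₀ hE
    linear_combination A*(A*D-B*C)*hY + A*(A*D-B*C)*D*hV + A*D*e2
      - C*((A*D-B*C)*hQbar + (A*D-B*C)*hQ + (A*D-B*C)*B*hV + B*e2)
  have f3 : (1 + K*P) * (A * Ybar)
      = A*(K*P*R) + (1 + C*K)*P*W + (B - (A*D-B*C)*K)*P*Z := by
    linear_combination A*hYbar + P*f1 + P*A*hU - P*K*f2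
  have hden : A * (1 + K*P) ≠ 0 := mul_ne_zero hA hwp1
  have : Ybar = (A*(K*P*R) + (1 + C*K)*P*W + (B - (A*D-B*C)*K)*P*Z) / (A * (1 + K*P)) := by
    rw [eq_div_iff hden]; linear_combination f3
  rw [this]; field_simp
end

section
/- Under the closed-loop equations of the two-way-coded system under injection attacks, the plant output as seen on the controller side satisfies Y = (K*P/(1 + K*P))*R + (a⁻¹*(P − c)/(1 + K*P))*W + (a⁻¹*(a*d − b*c + b*P)/(1 + K*P))*Z. -/
/-- Closed-loop expression for the plant output `Y` as seen on the controller side, for the two-way-coded system under injection attacks `W, Z` and reference `R`. -/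
theorem twoWayCoding_closedLoop_stmt2
    (a b c d : ℝ) (had : a * d ≠ 0) (hdet : a * d - b * c ≠ 0)
    (P K R W Z Y Ybar U Ubar Q Qbar V Vbar : RatFunc ℝ)
    (hYbar : Ybar = P * Ubar)
    (hUbar : Ubar = co (d / (a * d - b * c)) * Qbar + co (-b / (a * d - b * c)) * Ybar)
    (hVbar : Vbar = co (-c / (a * d - b * c)) * Qbar + co (a / (a * d - b * c)) * Ybar)
    (hU : U = K * (R - Y))
    (hY : Y = co c * U + co d * V)
    (hQ : Q = co a * U + co b * V)
    (hQbar : Qbar = Q + W)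
    (hV : V = Vbar + Z)
    (hwp1 : 1 + K * P ≠ 0)
    (hwp2 : 1 + co c * K ≠ 0)
    (hwp3 : co (a * d - b * c) + co b * P ≠ 0) :
    Y = (K * P / (1 + K * P)) * R
      + ((co a)⁻¹ * (P - co c) / (1 + K * P)) * W
      + ((co a)⁻¹ * (co (a * d - b * c) + co b * P) / (1 + K * P)) * Z := by
  have ha : a ≠ 0 := fun h => had (by simp [h])
  have hco : Function.Injective co := (algebraMap ℝ (RatFunc ℝ)).injective
  have hca : co a ≠ 0 := fun h => ha (hco (by simpa [co] using h))
  have hcdet : co (a*d - b*c) ≠ 0 := fun h => hdet (hco (by simpa [co] using h))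
  simp only [co, map_div₀, map_neg, map_sub, map_mul] at *
  set A := algebraMap ℝ (RatFunc ℝ) a
  set B := algebraMap ℝ (RatFunc ℝ) b
  set C := algebraMap ℝ (RatFunc ℝ) c
  set D := algebraMap ℝ (RatFunc ℝ) d
  rw [hYbar] at hUbar hVbar
  have h1 : Ubar * (A*D - B*C + B * P) = D * Qbar := by
    simp only [div_mul_eq_mul_div, ← add_div] at hUbar
    rw [eq_div_iff hcdet] at hUbar
    linear_combination hUbar
  simp only [div_mul_eq_mul_div, ← add_div] at hVbar
  rw [eq_div_iff hcdet] at hVbar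
  have h2 : (V - Z) * (A*D - B*C) = -C * Qbar + A * (P * Ubar) := by
    have key : ((V - Z) * (A*D - B*C)) * (A*D - B*C)
        = (-C * Qbar + A * (P * Ubar)) * (A*D - B*C) := by
      rw [hV]; linear_combination (A*D - B*C) * hVbar
    exact mul_right_cancel₀ hcdet key
  have h3 : Qbar = A * U + B * V + W := by rw [hQbar, hQ]
  have h4 : V * (A*D) = Z * (A*D - B*C + B*P) + (A*U + W) * (P - C) := by
    have key : V * (A*D) * (A*D - B*C)
        = (Z * (A*D - B*C + B*P) + (A*U + W) * (P - C)) * (A*D - B*C) := by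
      linear_combination (A*D - B*C + B*P) * h2 + A*P*h1 + (P - C)*(A*D - B*C)*h3
    exact mul_right_cancel₀ hcdet key
  have h5 : Y * A * (1 + K*P) = A*K*P*R + W*(P - C) + Z*(A*D - B*C + B*P) := by
    linear_combination A*hY + h4 + A*P*hU
  have hY' : Y = (A*K*P*R + W*(P - C) + Z*(A*D - B*C + B*P)) / (A*(1+K*P)) := by
    rw [eq_div_iff (mul_ne_zero hca hwp1)]; linear_combination h5
  rw [hY']
  field_simp
end

section
/- Under the closed-loop equations of the two-way-coded system under injection attacks, the plant input satisfies Ū = (K/(1 + K*P))*R + (a⁻¹*(1 + c*K)/(1 + K*P))*W + (a⁻¹*(b − (a*d − b*c)*K)/(1 + K*P))*Z. -/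
/-- Closed-loop expression for the plant input `Ū` of the two-way-coded system under injection attacks `W, Z` and reference `R`. -/
theorem twoWayCoding_closedLoop_stmt3
    (a b c d : ℝ) (had : a * d ≠ 0) (hdet : a * d - b * c ≠ 0)
    (P K R W Z Y Ybar U Ubar Q Qbar V Vbar : RatFunc ℝ)
    (hYbar : Ybar = P * Ubar)
    (hUbar : Ubar = co (d / (a * d - b * c)) * Qbar + co (-b / (a * d - b * c)) * Ybar)
    (hVbar : Vbar = co (-c / (a * d - b * c)) * Qbar + co (a / (a * d - b * c)) * Ybar)
    (hU : U = K * (R - Y))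
    (hY : Y = co c * U + co d * V)
    (hQ : Q = co a * U + co b * V)
    (hQbar : Qbar = Q + W)
    (hV : V = Vbar + Z)
    (hwp1 : 1 + K * P ≠ 0)
    (hwp2 : 1 + co c * K ≠ 0)
    (hwp3 : co (a * d - b * c) + co b * P ≠ 0) :
    Ubar = (K / (1 + K * P)) * R
      + ((co a)⁻¹ * (1 + co c * K) / (1 + K * P)) * W
      + ((co a)⁻¹ * (co b - co (a * d - b * c) * K) / (1 + K * P)) * Z := by
  have ha : a ≠ 0 := fun h => had (by simp [h])
  have hca : co a ≠ 0 := by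
    simp only [co, ne_eq, map_eq_zero]; exact ha
  have hcd : co (a * d - b * c) ≠ 0 := by
    simp only [co, ne_eq, map_eq_zero]; exact hdet
  have hcd' : RatFunc.C a * RatFunc.C d - RatFunc.C b * RatFunc.C c ≠ 0 := by
    have : co (a * d - b * c) = RatFunc.C a * RatFunc.C d - RatFunc.C b * RatFunc.C c := by
      simp [co, map_sub, map_mul, RatFunc.algebraMap_eq_C]
    rwa [this] at hcd
  subst hYbar hQ hQbar hVbar
  simp only [co, map_div₀, map_neg] at hUbar hV
  field_simp [hcd'] at hUbar hV
  have h1 : co (a * d - b * c) * Ubar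
      = co d * (co a * U + co b * V + W) - co b * (P * Ubar) := by
    simp only [co, map_sub, map_mul, RatFunc.algebraMap_eq_C] at hUbar ⊢
    linear_combination hUbar
  have h3 : co (a * d - b * c) * V
      = -(co c) * (co a * U + co b * V + W) + co a * (P * Ubar)
        + co (a * d - b * c) * Z := by
    simp only [co, map_sub, map_mul, RatFunc.algebraMap_eq_C] at hV ⊢
    apply mul_left_cancel₀ hcd'
    linear_combination (RatFunc.C a * RatFunc.C d - RatFunc.C b * RatFunc.C c) * hV
  have key : co (a * d - b * c) * (co a * (1 + K * P) * Ubar)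
      = co (a * d - b * c) * (co a * K * R + (1 + co c * K) * W
        + (co b - co (a * d - b * c) * K) * Z) := by
    simp only [co, map_sub, map_mul] at h1 h3 hU hY ⊢
    linear_combination (algebraMap ℝ (RatFunc ℝ) a) * h1
      + (algebraMap ℝ (RatFunc ℝ) a) * (algebraMap ℝ (RatFunc ℝ) a
          * algebraMap ℝ (RatFunc ℝ) d - algebraMap ℝ (RatFunc ℝ) b
          * algebraMap ℝ (RatFunc ℝ) c) * hU
      - (algebraMap ℝ (RatFunc ℝ) a) * (algebraMap ℝ (RatFunc ℝ) a
          * algebraMap ℝ (RatFunc ℝ) d - algebraMap ℝ (RatFunc ℝ) b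
          * algebraMap ℝ (RatFunc ℝ) c) * K * hY
      + ((algebraMap ℝ (RatFunc ℝ) b) - (algebraMap ℝ (RatFunc ℝ) a
          * algebraMap ℝ (RatFunc ℝ) d - algebraMap ℝ (RatFunc ℝ) b
          * algebraMap ℝ (RatFunc ℝ) c) * K) * h3
  have key2 := mul_left_cancel₀ hcd key
  field_simp
  linear_combination key2
end

section
/- Under the closed-loop equations of the two-way-coded system under injection attacks, the transmitted signal on the plant side satisfies Q̄ = (d⁻¹*K*(a*d − b*c + b*P)/(1 + K*P))*R + (a⁻¹*d⁻¹*(1 + c*K)*(a*d − b*c + b*P)/(1 + K*P))*W + (a⁻¹*d⁻¹*(b − (a*d − b*c)*K)*(a*d − b*c + b*P)/(1 + K*P))*Z. -/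
/-- Closed-loop expression for the transmitted signal `Q̄` on the plant side of the two-way-coded system under injection attacks `W, Z` and reference `R`. -/
theorem twoWayCoding_closedLoop_stmt4
    (a b c d : ℝ) (had : a * d ≠ 0) (hdet : a * d - b * c ≠ 0)
    (P K R W Z Y Ybar U Ubar Q Qbar V Vbar : RatFunc ℝ)
    (hYbar : Ybar = P * Ubar)
    (hUbar : Ubar = co (d / (a * d - b * c)) * Qbar + co (-b / (a * d - b * c)) * Ybar)
    (hVbar : Vbar = co (-c / (a * d - b * c)) * Qbar + co (a / (a * d - b * c)) * Ybar)
    (hU : U = K * (R - Y))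
    (hY : Y = co c * U + co d * V)
    (hQ : Q = co a * U + co b * V)
    (hQbar : Qbar = Q + W)
    (hV : V = Vbar + Z)
    (hwp1 : 1 + K * P ≠ 0)
    (hwp2 : 1 + co c * K ≠ 0)
    (hwp3 : co (a * d - b * c) + co b * P ≠ 0) :
    Qbar = ((co d)⁻¹ * K * (co (a * d - b * c) + co b * P) / (1 + K * P)) * R
      + ((co a)⁻¹ * (co d)⁻¹ * (1 + co c * K) * (co (a * d - b * c) + co b * P) / (1 + K * P)) * W
      + ((co a)⁻¹ * (co d)⁻¹ * (co b - co (a * d - b * c) * K) * (co (a * d - b * c) + co b * P) / (1 + K * P)) * Z := by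
  have ha : a ≠ 0 := fun h => had (by simp [h])
  have hd : d ≠ 0 := fun h => had (by simp [h])
  have hca : co a ≠ 0 := by
    simpa [co] using (map_ne_zero (algebraMap ℝ (RatFunc ℝ))).mpr ha
  have hcd : co d ≠ 0 := by
    simpa [co] using (map_ne_zero (algebraMap ℝ (RatFunc ℝ))).mpr hd
  have hcD : co (a * d - b * c) ≠ 0 := by
    simpa [co] using (map_ne_zero (algebraMap ℝ (RatFunc ℝ))).mpr hdet
  -- rewrite coded coefficients
  simp only [co, map_div₀, map_neg, map_sub, map_mul] at hUbar hVbar hwp3 ⊢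
  simp only [co, map_sub, map_mul] at hcD
  set A := algebraMap ℝ (RatFunc ℝ) a with hA
  set B := algebraMap ℝ (RatFunc ℝ) b with hB
  set C := algebraMap ℝ (RatFunc ℝ) c with hC
  set D := algebraMap ℝ (RatFunc ℝ) d with hD
  simp only [co] at hY hQ hwp2
  have hE : A * D - B * C + B * P ≠ 0 := hwp3
  have hDet : A * D - B * C ≠ 0 := hcD
  -- step 1 : (1 + C*K) * U = K*R - D*K*V
  have s1 : (1 + C * K) * U = K * R - D * K * V := by
    linear_combination hU - K * hY
  -- step 2 : (A*D - B*C + B*P) * Ubar = D * Qbar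
  have s2 : (A * D - B * C + B * P) * Ubar = D * Qbar := by
    rw [hYbar] at hUbar
    field_simp at hUbar
    rw [eq_div_iff (by rw [mul_comm D A]; exact hDet)] at hUbar
    linear_combination hUbar
  -- step 3 : (A*D - B*C + B*P) * V = (P - C) * Qbar + (A*D - B*C + B*P) * Z
  have s3 : (A * D - B * C + B * P) * V = (P - C) * Qbar + (A * D - B * C + B * P) * Z := by
    rw [hYbar] at hVbar
    field_simp at hVbar
    rw [eq_div_iff (by rw [mul_comm C B]; exact hDet)] at hVbar
    have t : (A * D - B * C) * Vbar = -C * Qbar + A * P * Ubar := by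
      apply mul_left_cancel₀ hDet
      linear_combination (A * D - B * C) * hVbar
    rw [hV]
    apply mul_left_cancel₀ hDet
    linear_combination (A * D - B * C + B * P) * t + A * P * s2
  -- key identity
  have key : A * D * (1 + K * P) * Qbar
      = (A * D - B * C + B * P) * (A * K * R + (1 + C * K) * W + (B - (A * D - B * C) * K) * Z) := by
    linear_combination (A * D - B * C + B * P) * (1 + C * K) * hQbar
      + (A * D - B * C + B * P) * (1 + C * K) * hQ
      + A * (A * D - B * C + B * P) * s1
      + (B - (A * D - B * C) * K) * s3
  have hADP : A * D * (1 + K * P) ≠ 0 :=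
    mul_ne_zero (mul_ne_zero hca hcd) hwp1
  have hQfin : Qbar = (A * D - B * C + B * P)
      * (A * K * R + (1 + C * K) * W + (B - (A * D - B * C) * K) * Z)
      / (A * D * (1 + K * P)) := by
    rw [eq_div_iff hADP]
    linear_combination key
  rw [hQfin]
  have hca' : A ≠ 0 := hca
  have hcd' : D ≠ 0 := hcd
  have hD1 : D + D * P * K ≠ 0 := fun h =>
    mul_ne_zero hcd' hwp1 (by linear_combination h)
  have hA1 : A + A * P * K ≠ 0 := fun h =>
    mul_ne_zero hca' hwp1 (by linear_combination h)
  have hAD1 : A * D + A * D * P * K ≠ 0 := fun h =>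
    mul_ne_zero (mul_ne_zero hca' hcd') hwp1 (by linear_combination h)
  field_simp [hD1, hA1, hAD1]
end

section
/- Under the closed-loop equations of the two-way-coded system under injection attacks, the feedback-path signal on the controller side satisfies V = (d⁻¹*K*(P − c)/(1 + K*P))*R + (a⁻¹*d⁻¹*(1 + c*K)*(P − c)/(1 + K*P))*W + (a⁻¹*d⁻¹*(1 + c*K)*(a*d − b*c + b*P)/(1 + K*P))*Z. -/
/-- Closed-loop expression for the feedback-path signal `V` on the controller side of the two-way-coded system under injection attacks `W, Z` and reference `R`. -/
theorem twoWayCoding_closedLoop_stmt5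
    (a b c d : ℝ) (had : a * d ≠ 0) (hdet : a * d - b * c ≠ 0)
    (P K R W Z Y Ybar U Ubar Q Qbar V Vbar : RatFunc ℝ)
    (hYbar : Ybar = P * Ubar)
    (hUbar : Ubar = co (d / (a * d - b * c)) * Qbar + co (-b / (a * d - b * c)) * Ybar)
    (hVbar : Vbar = co (-c / (a * d - b * c)) * Qbar + co (a / (a * d - b * c)) * Ybar)
    (hU : U = K * (R - Y))
    (hY : Y = co c * U + co d * V)
    (hQ : Q = co a * U + co b * V)
    (hQbar : Qbar = Q + W)
    (hV : V = Vbar + Z)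
    (hwp1 : 1 + K * P ≠ 0)
    (hwp2 : 1 + co c * K ≠ 0)
    (hwp3 : co (a * d - b * c) + co b * P ≠ 0) :
    V = ((co d)⁻¹ * K * (P - co c) / (1 + K * P)) * R
      + ((co a)⁻¹ * (co d)⁻¹ * (1 + co c * K) * (P - co c) / (1 + K * P)) * W
      + ((co a)⁻¹ * (co d)⁻¹ * (1 + co c * K) * (co (a * d - b * c) + co b * P) / (1 + K * P)) * Z := by
  have ha : a ≠ 0 := fun h => had (by simp [h])
  have hd : d ≠ 0 := fun h => had (by simp [h])
  have hca : co a ≠ 0 := by simpa [co] using ha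
  have hcd : co d ≠ 0 := by simpa [co] using hd
  have hinj : Function.Injective (algebraMap ℝ (RatFunc ℝ)) := (algebraMap ℝ (RatFunc ℝ)).injective
  have hdet' : co (a * d - b * c) ≠ 0 := fun h => hdet (hinj (h.trans (map_zero _).symm))
  have hco : ∀ x y : ℝ, co (x / y) = co x / co y := fun x y => map_div₀ (algebraMap ℝ (RatFunc ℝ)) x y
  have hcneg : ∀ x : ℝ, co (-x) = - co x := fun x => map_neg (algebraMap ℝ (RatFunc ℝ)) x
  have hΔ : co (a * d - b * c) = co a * co d - co b * co c := by
    simp [co, map_sub, map_mul]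
  have hUbar' : co (a * d - b * c) * Ubar = co d * Qbar - co b * Ybar := by
    rw [hUbar, hco, hco, hcneg]
    field_simp
    ring
  have hVbar' : co (a * d - b * c) * Vbar = - co c * Qbar + co a * Ybar := by
    rw [hVbar, hco, hco, hcneg]
    field_simp
  rw [hΔ] at hUbar' hVbar'
  have hkey' : (co a * co d - co b * co c) * (co a * co d * (1 + K * P) * V) =
      (co a * co d - co b * co c) * (co a * K * (P - co c) * R + (1 + co c * K) * (P - co c) * W
        + (1 + co c * K) * ((co a * co d - co b * co c) + co b * P) * Z) := by
    linear_combination (1 + co c * K) * (((co a * co d - co b * co c) + co b * P)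
          * ((co a * co d - co b * co c) * hV + hVbar' + co a * hYbar)
        + co a * P * (hUbar' - co b * hYbar)
        + (co a * co d - co b * co c) * (P - co c) * (hQbar + hQ))
      + co a * (P - co c) * (co a * co d - co b * co c) * (hU - K * hY)
  have hdet'' : co a * co d - co b * co c ≠ 0 := hΔ ▸ hdet'
  have hkey := mul_left_cancel₀ hdet'' hkey'
  have hne : co a * co d * (1 + K * P) ≠ 0 := mul_ne_zero (mul_ne_zero hca hcd) hwp1
  have hVform : V = (co a * K * (P - co c) * R + (1 + co c * K) * (P - co c) * W
      + (1 + co c * K) * ((co a * co d - co b * co c) + co b * P) * Z)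
      / (co a * co d * (1 + K * P)) := by
    rw [eq_div_iff hne]
    linear_combination hkey
  rw [hVform, hΔ]
  field_simp
end

section
/- Consider only the plant-side equations Ȳ = P*Ū, Ū = ā*Q̄ + b̄*Ȳ, V̄ = c̄*Q̄ + d̄*Ȳ, where a*d ≠ 0, a*d − b*c ≠ 0 and a*d − b*c + b*P ≠ 0. Then V̄ = ((P − c)/(a*d − b*c + b*P))*Q̄; that is, from the attacker's viewpoint the plant behaves as the equivalent plant with transfer function P̄ = (P − c)/(a*d − b*c + b*P). -/
/-- From the attacker's viewpoint, the plant side of the two-way-coded loop behaves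
as the equivalent plant `P̄ = (P - c)/(a·d - b·c + b·P)`: under the plant-side
equations, `V̄ = P̄ · Q̄`. -/
theorem equivalentPlant_attackerViewpoint
    (a b c d : ℝ) (had : a * d ≠ 0) (hdet : a * d - b * c ≠ 0)
    (P Qbar Ubar Ybar Vbar : RatFunc ℝ)
    (hYbar : Ybar = P * Ubar)
    (hUbar : Ubar = co (d / (a * d - b * c)) * Qbar + co (-b / (a * d - b * c)) * Ybar)
    (hVbar : Vbar = co (-c / (a * d - b * c)) * Qbar + co (a / (a * d - b * c)) * Ybar)
    (hwp : co (a * d - b * c) + co b * P ≠ 0) :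
    Vbar = ((P - co c) / (co (a * d - b * c) + co b * P)) * Qbar := by
  have hΔ : co (a * d - b * c) ≠ 0 := by
    simpa [co] using (map_ne_zero (algebraMap ℝ (RatFunc ℝ))).mpr hdet
  simp only [co, map_div₀, map_neg, map_mul, map_sub] at *
  set A := algebraMap ℝ (RatFunc ℝ) a
  set B := algebraMap ℝ (RatFunc ℝ) b
  set C := algebraMap ℝ (RatFunc ℝ) c
  set D := algebraMap ℝ (RatFunc ℝ) d
  have key : Ybar * (A * D - B * C + B * P) = P * D * Qbar := by
    rw [hUbar] at hYbar
    field_simp at hYbar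
    rw [eq_div_iff (by rw [mul_comm D A]; exact hΔ)] at hYbar
    linear_combination hYbar
  rw [hVbar, div_mul_eq_mul_div (P - C), eq_div_iff hwp]
  field_simp
  rw [div_eq_iff (by rw [mul_comm C B]; exact hΔ)]
  linear_combination A * key
end

section
/- Consider only the controller-side equations U = K*(R − Y), Y = c*U + d*V, Q = a*U + b*V, where a*d ≠ 0, a*d − b*c ≠ 0 and 1 + c*K ≠ 0. Then Q = (a*K/(1 + c*K))*R + ((b − (a*d − b*c)*K)/(1 + c*K))*V; that is, from the attacker's viewpoint the controller behaves as the equivalent controller with transfer function K̄ = (b − (a*d − b*c)*K)/(1 + c*K) driven by the equivalent reference R̄ = (a*K/(b − (a*d − b*c)*K))*R. -/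
/-- From the attacker's viewpoint, the controller side of the two-way-coded loop
behaves as the equivalent controller `K̄ = (b - (a·d - b·c)·K)/(1 + c·K)` driven by the
equivalent reference `R̄ = (a·K/(b - (a·d - b·c)·K))·R`: under the controller-side
equations, `Q = (a·K/(1 + c·K))·R + K̄·V`. -/
theorem equivalentController_attackerViewpoint
    (a b c d : ℝ) (had : a * d ≠ 0) (hdet : a * d - b * c ≠ 0)
    (K R Y U Q V : RatFunc ℝ)
    (hU : U = K * (R - Y))
    (hY : Y = co c * U + co d * V)
    (hQ : Q = co a * U + co b * V)
    (hwp : 1 + co c * K ≠ 0) :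
    Q = (co a * K / (1 + co c * K)) * R
      + ((co b - co (a * d - b * c) * K) / (1 + co c * K)) * V := by
  have hU' : (1 + co c * K) * U = K * R - co d * K * V := by
    rw [hY] at hU; ring_nf; ring_nf at hU; linear_combination hU
  subst hQ
  field_simp
  rw [eq_div_iff (by rw [mul_comm K]; exact hwp)]
  simp only [co, map_sub, map_mul] at hU' ⊢
  linear_combination (algebraMap ℝ (RatFunc ℝ) a) * hU'
end

section
/- Let m, n : Polynomial ℝ and let F₁, F₂ be real numbers with F₂ ≠ 0 and F₁ ≠ F₂. Suppose every complex root of n + F₁·m has negative real part and every complex root of n + F₂·m has negative real part. Then there exist real numbers a, b, c, d with a·d ≠ 0 and a·d − b·c ≠ 0 such that every complex root of (a·d − b·c)·n + b·m has negative real part AND every complex root of m − c·n has negative real part. That is, two-way coding parameters can be chosen making the equivalent plant P̄ simultaneously stable and minimum-phase. -/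
/-- If the plant is stabilized by two distinct static output feedback gains `F₁ ≠ F₂`
with `F₂ ≠ 0`, then two-way coding parameters `a, b, c, d` (with `a·d ≠ 0` and
`a·d - b·c ≠ 0`) can be chosen such that the equivalent plant
`P̄ = (m - c·n)/((a·d - b·c)·n + b·m)` is simultaneously stable and minimum-phase. -/
theorem equivalentPlant_stable_and_minimumPhase
    (m n : Polynomial ℝ) (F₁ F₂ : ℝ)
    (hF₂ : F₂ ≠ 0) (hne : F₁ ≠ F₂)
    (hstab₁ : ∀ z : ℂ, Polynomial.aeval z (n + Polynomial.C F₁ * m) = 0 → z.re < 0)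
    (hstab₂ : ∀ z : ℂ, Polynomial.aeval z (n + Polynomial.C F₂ * m) = 0 → z.re < 0) :
    ∃ a b c d : ℝ, a * d ≠ 0 ∧ a * d - b * c ≠ 0 ∧
      (∀ z : ℂ, Polynomial.aeval z
        (Polynomial.C (a * d - b * c) * n + Polynomial.C b * m) = 0 → z.re < 0) ∧
      (∀ z : ℂ, Polynomial.aeval z (m - Polynomial.C c * n) = 0 → z.re < 0) := by
  refine ⟨1 - F₁ / F₂, F₁, -(1 / F₂), 1, ?_, ?_, ?_, ?_⟩
  · have : F₁ / F₂ ≠ 1 := fun h => hne (by field_simp at h; linarith)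
    simp only [mul_one]
    intro h
    exact this (by linarith [sub_eq_zero.mp h])
  · have h1 : (1 - F₁ / F₂) * 1 - F₁ * -(1 / F₂) = 1 := by field_simp; ring
    rw [h1]; norm_num
  · have h1 : (1 - F₁ / F₂) * 1 - F₁ * -(1 / F₂) = 1 := by field_simp; ring
    rw [h1]
    intro z hz
    apply hstab₁ z
    simpa using hz
  · intro z hz
    apply hstab₂ z
    have : m - Polynomial.C (-(1 / F₂)) * n = Polynomial.C (1 / F₂) * (n + Polynomial.C F₂ * m) := by
      have h2 : (1 / F₂) * F₂ = 1 := by field_simp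
      rw [mul_add, ← mul_assoc, ← Polynomial.C_mul, h2, Polynomial.C_1, one_mul,
        Polynomial.C_neg, neg_mul, sub_neg_eq_add, add_comm]
    rw [this] at hz
    simp only [map_mul, Polynomial.aeval_C] at hz
    rcases mul_eq_zero.mp hz with h | h
    · exfalso
      have : (1 / F₂ : ℝ) ≠ 0 := by positivity
      exact this (by exact_mod_cast Complex.ofReal_eq_zero.mp (by simpa using h))
    · exact h
end

section
/- Let m_K, n_K : Polynomial ℝ be coprime (the numerator and denominator of the controller K = m_K/n_K), let a, b, c, d be real numbers with b ≠ 0, and let z be a complex number. If m_K(z) = 0 (z is a zero of K), then (b·n_K − (a·d − b·c)·m_K)(z) ≠ 0, evaluating in ℂ via the real algebra map. Hence when b ≠ 0 the zeros of the equivalent controller K̄ = (b·n_K − (a·d − b·c)·m_K)/(n_K + c·m_K) are all different from those of K. -/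
/-- If `b ≠ 0`, the zeros of the equivalent controller
`K̄ = (b·n_K - (a·d - b·c)·m_K)/(n_K + c·m_K)` are all different from those of the
original controller `K = m_K/n_K`: a complex root of `m_K` is not a root of
`b·n_K - (a·d - b·c)·m_K`. -/
theorem equivalentController_zeros_differ
    (mK nK : Polynomial ℝ) (hK : IsCoprime mK nK)
    (a b c d : ℝ) (hb : b ≠ 0) (z : ℂ)
    (hz : Polynomial.aeval z mK = 0) :
    Polynomial.aeval z (Polynomial.C b * nK - Polynomial.C (a * d - b * c) * mK) ≠ 0 := by
  obtain ⟨u, v, huv⟩ := hK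
  have h1 : Polynomial.aeval z (u * mK + v * nK) = 1 := by rw [huv]; simp
  simp only [map_add, map_mul, hz, mul_zero, zero_add] at h1
  have hn : Polynomial.aeval z nK ≠ 0 := fun h => by simp [h] at h1
  simp only [map_sub, map_mul, hz, mul_zero, sub_zero, Polynomial.aeval_C]
  exact mul_ne_zero (by simpa using hb) hn
end
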